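/- (Lemma B.7) Let q ∈ (0, p*] and suppose π, φ ∈ (0,1) satisfy v/p* = C_+(π; q)/π + C_S(q)/q and (U_r(p*) − U_ℓ(p*))/p* = C_+(φ; q)/φ + C_S(q)/q. Then π is less than, equal to, or greater than φ according as v is greater than, equal to, or less than U_r(p*) − U_ℓ(p*). -/
import Mathlib


/-- The receiver's payoff from taking action `ℓ` at belief `p`. -/
noncomputable def Ul (ulL ulR p : ℝ) : ℝ := p * ulR + (1 - p) * ulL

/-- The receiver's payoff from taking action `r` at belief `p`. -/
noncomputable def Ur (urL urR p : ℝ) : ℝ := p * urR + (1 - p) * urL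

/-- The cost term `C_S(p)` of the stationary strategy. -/
noncomputable def CS (lam c pstar p : ℝ) : ℝ :=
  2 * c * (pstar - p) / (lam * pstar * (1 - p))

/-- The cost term `C_+(p;q)` of the R-drifting strategy with stopping bound `q`. -/
noncomputable def Cplus (lam c p q : ℝ) : ℝ :=
  c / lam * (p * Real.log (q / (1 - q) * ((1 - p) / p)) + 1 - p / q)

/-- Lemma B.7: if `v/p* = C_+(π;q)/π + C_S(q)/q` and
`(U_r(p*) − U_ℓ(p*))/p* = C_+(φ;q)/φ + C_S(q)/q`, then `π ⋚ φ` according as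
`v ⋛ U_r(p*) − U_ℓ(p*)`. -/
theorem lemma_B7
    (lam c v : ℝ) (ulL ulR urL urR : ℝ) (hlam : 0 < lam) (hc : 0 < c) (hv : 0 < v)
    (hul : ulL > max urL 0) (hur : urR > max ulR 0)
    (pstar : ℝ) (hpstar : pstar ∈ Set.Ioo (0 : ℝ) 1)
    (q : ℝ) (hq : q ∈ Set.Ioc (0 : ℝ) pstar)
    (pi phi : ℝ) (hpi : pi ∈ Set.Ioo (0 : ℝ) 1) (hphi : phi ∈ Set.Ioo (0 : ℝ) 1)
    (hpieq : v / pstar = Cplus lam c pi q / pi + CS lam c pstar q / q)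
    (hphieq : (Ur urL urR pstar - Ul ulL ulR pstar) / pstar
      = Cplus lam c phi q / phi + CS lam c pstar q / q) :
    (pi < phi ↔ Ur urL urR pstar - Ul ulL ulR pstar < v)
    ∧ (pi = phi ↔ v = Ur urL urR pstar - Ul ulL ulR pstar)
    ∧ (phi < pi ↔ v < Ur urL urR pstar - Ul ulL ulR pstar) := by
  obtain ⟨hp0, hp1⟩ := hpstar
  obtain ⟨hq0, hqp⟩ := hq
  have hq1 : q < 1 := lt_of_le_of_lt hqp hp1
  set W := Ur urL urR pstar - Ul ulL ulR pstar with hW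
  -- key formula
  have key : ∀ p ∈ Set.Ioo (0:ℝ) 1, Cplus lam c p q / p
      = c / lam * (Real.log (q / (1 - q)) + (Real.log ((1 - p) / p) + 1 / p) - 1 / q) := by
    intro p hp
    obtain ⟨h0, h1⟩ := hp
    have hlog : Real.log (q / (1 - q) * ((1 - p) / p))
        = Real.log (q / (1 - q)) + Real.log ((1 - p) / p) := by
      have e1 : (0:ℝ) < 1 - q := by linarith
      have e2 : (0:ℝ) < 1 - p := by linarith
      apply Real.log_mul
      · positivity
      · positivity
    rw [Cplus, hlog]
    field_simp
    ring
  -- strict antitonicity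
  have anti : ∀ p1 ∈ Set.Ioo (0:ℝ) 1, ∀ p2 ∈ Set.Ioo (0:ℝ) 1, p1 < p2 →
      Cplus lam c p2 q / p2 < Cplus lam c p1 q / p1 := by
    intro p1 hp1' p2 hp2' h12
    rw [key p1 hp1', key p2 hp2']
    clear key
    have hcl : 0 < c / lam := by positivity
    obtain ⟨ha1, ha2⟩ := hp1'
    obtain ⟨hb1, hb2⟩ := hp2'
    have hlog : Real.log ((1 - p2) / p2) < Real.log ((1 - p1) / p1) := by
      apply Real.log_lt_log
      · have : (0:ℝ) < 1 - p2 := by linarith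
        positivity
      · rw [div_lt_div_iff₀ hb1 ha1]
        nlinarith
    have hinv : 1 / p2 < 1 / p1 := one_div_lt_one_div_of_lt ha1 h12
    nlinarith
  set A := Cplus lam c pi q / pi with hA
  set B := Cplus lam c phi q / phi with hB
  have hAB : A - B = (v - W) / pstar := by
    have : v / pstar - W / pstar = A - B := by rw [hpieq, hphieq]; ring
    rw [← this]; ring
  have hps : (0:ℝ) < pstar := hp0
  -- translate
  have lt1 : pi < phi → W < v := by
    intro h
    have := anti pi hpi phi hphi h
    have h2 : B < A := this
    have : 0 < (v - W) / pstar := by linarith [hAB]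
    have := (div_pos_iff.mp this)
    rcases this with ⟨h3, _⟩ | ⟨_, h4⟩
    · linarith
    · linarith
  have lt2 : phi < pi → v < W := by
    intro h
    have h2 : A < B := anti phi hphi pi hpi h
    have hneg : (v - W) / pstar < 0 := by linarith [hAB]
    rcases div_neg_iff.mp hneg with ⟨_, h4⟩ | ⟨h3, _⟩
    · linarith
    · linarith
  have eq1 : pi = phi → v = W := by
    intro h
    have : A = B := by rw [hA, hB, h]
    have : (v - W) / pstar = 0 := by linarith [hAB]
    have := (div_eq_zero_iff.mp this)
    rcases this with h' | h'
    · linarith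
    · linarith
  constructor
  · constructor
    · exact lt1
    · intro h
      rcases lt_trichotomy pi phi with h' | h' | h'
      · exact h'
      · exact absurd (eq1 h') (by linarith)
      · exact absurd (lt2 h') (by linarith)
  constructor
  · constructor
    · exact eq1
    · intro h
      rcases lt_trichotomy pi phi with h' | h' | h'
      · exact absurd (lt1 h') (by linarith)
      · exact h'
      · exact absurd (lt2 h') (by linarith)
  · constructor
    · exact lt2
    · intro h
      rcases lt_trichotomy pi phi with h' | h' | h'
      · exact absurd (lt1 h') (by linarith)
      · exact absurd (eq1 h') (by linarith)
      · exact h'
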